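/- arXiv:1610.00933 — 5 statements merged into one kernel-verified Lean document; each statement's English description precedes it below -/
import Mathlib

section
/- For p > 1, ∫_0^1 |log t|^{p-1}/(1-t²) dt = Γ(p) · Σ_{k=0}^∞ 1/(1+2k)^p. -/
open MeasureTheory Real ENNReal Filter Topology Set

/-- `[u]^p`: the Gagliardo seminorm to the power `p`, with kernel `|x-y|^{-2}` (case `sp = 1`). -/
noncomputable def gagP (p : ℝ) (u : ℝ → ℝ) : ℝ≥0∞ :=
  ∫⁻ x : ℝ, ∫⁻ y : ℝ, ENNReal.ofReal (|u x - u y| ^ p / |x - y| ^ 2)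

/-- The Gagliardo seminorm `[u]`. -/
noncomputable def gagSemi (p : ℝ) (u : ℝ → ℝ) : ℝ≥0∞ := (gagP p u) ^ (1 / p)

/-- The full `W^{s,p}(ℝ)` norm `(‖u‖_{L^p}^p + [u]^p)^{1/p}`. -/
noncomputable def sobNorm (p : ℝ) (u : ℝ → ℝ) : ℝ≥0∞ :=
  ((∫⁻ x : ℝ, ENNReal.ofReal (|u x| ^ p)) + gagP p u) ^ (1 / p)

/-- Membership in `W^{s,p}(ℝ)` (with `sp = 1`): `u ∈ L^p` and finite Gagliardo seminorm. -/
def InW (p : ℝ) (u : ℝ → ℝ) : Prop :=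
  MemLp u (ENNReal.ofReal p) volume ∧ gagP p u < ⊤

/-- Membership in `W̃^{s,p}_0(I)`: `u` is approximated in the `W^{s,p}(ℝ)` norm by
smooth functions compactly supported in `I`. -/
def InTildeW0 (p : ℝ) (I : Set ℝ) (u : ℝ → ℝ) : Prop :=
  ∀ ε : ℝ, 0 < ε → ∃ φ : ℝ → ℝ, ContDiff ℝ (⊤ : ℕ∞) φ ∧ HasCompactSupport φ ∧ tsupport φ ⊆ I ∧
    sobNorm p (fun x => u x - φ x) < ENNReal.ofReal ε

/-- The Moser family `u_ε`. -/
noncomputable def moser (s ε : ℝ) (x : ℝ) : ℝ :=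
  if |x| ≤ ε then |Real.log ε| ^ (1 - s)
  else if |x| < 1 then (abs (Real.log (abs x))) / |Real.log ε| ^ s
  else 0

/-- The constant `γ_s = 8 Γ(p+1) Σ_{k≥0} (1+2k)^{-p}`. -/
noncomputable def gammaS (p : ℝ) : ℝ :=
  8 * Real.Gamma (p + 1) * ∑' k : ℕ, 1 / (1 + 2 * (k : ℝ)) ^ p

/-- `Φ(t) = e^t - Σ_{k=0}^{⌈p-2⌉} t^k/k!`. -/
noncomputable def Phi (p t : ℝ) : ℝ :=
  Real.exp t - ∑ k ∈ Finset.range (⌈p - 2⌉₊ + 1), t ^ k / (k.factorial : ℝ)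

theorem stmt2 (p : ℝ) (hp : 1 < p) :
    ∫ t in (0:ℝ)..1, |Real.log t| ^ (p - 1) / (1 - t ^ 2) =
      Real.Gamma p * ∑' k : ℕ, 1 / (1 + 2 * (k : ℝ)) ^ p := by
  have hp0 : (0:ℝ) < p := by linarith
  -- summability
  have hsum : Summable fun k : ℕ => 1 / (1 + 2 * (k : ℝ)) ^ p := by
    have h1 : Summable fun k : ℕ => 1 / ((k : ℝ) + 1) ^ p := by
      have h2 := ((Real.summable_one_div_nat_rpow (p := p)).mpr hp).comp_injective
        Nat.succ_injective
      refine h2.congr fun k => ?_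
      simp [Function.comp, Nat.succ_eq_add_one]
    refine h1.of_nonneg_of_le (fun k => by positivity) (fun k => ?_)
    apply one_div_le_one_div_of_le
    · positivity
    · apply Real.rpow_le_rpow (by positivity) (by linarith) hp0.le
  -- Mellin/Dirichlet step
  set F : ℝ → ℂ := fun t => ((Real.exp (-t) / (1 - Real.exp (-(2*t))) : ℝ) : ℂ) with hF_def
  have hmel : HasSum (fun k : ℕ => Complex.Gamma p * 1 / ((1 + 2 * (k:ℝ) : ℝ) : ℂ) ^ (p:ℂ))
      (mellin F p) := by
    apply hasSum_mellin (p := fun k : ℕ => 1 + 2 * (k:ℝ)) (fun k => Or.inr (by positivity))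
      (by simpa using hp0)
    · intro t ht
      simp only [mem_Ioi] at ht
      have ht' : Real.exp (-(2*t)) < 1 := Real.exp_lt_one_iff.mpr (by linarith)
      have hg := (hasSum_geometric_of_lt_one (Real.exp_pos _).le ht').mul_left (Real.exp (-t))
      have heq : (fun k : ℕ => Real.exp (-t) * Real.exp (-(2*t)) ^ k) =
          fun k : ℕ => Real.exp (-(1 + 2 * (k:ℝ)) * t) := by
        funext k
        rw [← Real.exp_nat_mul, ← Real.exp_add]
        congr 1
        ring
      rw [heq] at hg
      have h2 := Complex.hasSum_ofReal.mpr hg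
      simpa [hF_def, div_eq_mul_inv] using h2
    · simpa using hsum
  -- identify mellin F p with a real integral
  have hreal : mellin F p =
      ((∫ x in Ioi (0:ℝ), x ^ (p-1) * (Real.exp (-x) / (1 - Real.exp (-(2*x))))) : ℝ) := by
    rw [mellin]
    refine Eq.trans ?_ (integral_ofReal (𝕜 := ℂ))
    refine setIntegral_congr_fun measurableSet_Ioi (fun x hx => ?_)
    rw [smul_eq_mul, show ((p:ℂ) - 1) = ((p-1:ℝ):ℂ) by norm_num,
      ← Complex.ofReal_cpow (le_of_lt (mem_Ioi.mp hx))]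
    simp only [hF_def]
    norm_cast
  -- substitution t = exp(-x)
  have himg : (fun x : ℝ => Real.exp (-x)) '' Ioi 0 = Ioo 0 1 := by
    ext y
    constructor
    · rintro ⟨x, hx, rfl⟩
      simp only [mem_Ioi] at hx
      exact ⟨Real.exp_pos _, Real.exp_lt_one_iff.mpr (by linarith)⟩
    · rintro ⟨hy0, hy1⟩
      refine ⟨-Real.log y, ?_, by simp [Real.exp_log hy0]⟩
      simp only [mem_Ioi]
      have := Real.log_neg hy0 hy1
      linarith
  have hsub : ∫ t in Ioo (0:ℝ) 1, |Real.log t| ^ (p - 1) / (1 - t ^ 2) =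
      ∫ x in Ioi (0:ℝ), x ^ (p-1) * (Real.exp (-x) / (1 - Real.exp (-(2*x)))) := by
    rw [← himg]
    rw [integral_image_eq_integral_abs_deriv_smul measurableSet_Ioi
      (f' := fun x => -Real.exp (-x))
      (fun x _ => by
        simpa [Function.comp_def] using ((Real.hasDerivAt_exp (-x)).comp x (hasDerivAt_neg x)).hasDerivWithinAt)
      (fun a _ b _ h => by
        have := Real.exp_injective h
        linarith)]
    refine setIntegral_congr_fun measurableSet_Ioi (fun x hx => ?_)
    simp only [mem_Ioi] at hx
    rw [smul_eq_mul, abs_neg, abs_of_pos (Real.exp_pos _), Real.log_exp,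
      abs_neg, abs_of_pos hx]
    rw [show Real.exp (-x) ^ 2 = Real.exp (-(2*x)) by
      rw [sq, ← Real.exp_add]; ring_nf]
    ring
  -- assemble
  rw [intervalIntegral.integral_of_le zero_le_one, MeasureTheory.integral_Ioc_eq_integral_Ioo,
    hsub]
  set I : ℝ := ∫ x in Ioi (0:ℝ), x ^ (p-1) * (Real.exp (-x) / (1 - Real.exp (-(2*x)))) with hI
  set S : ℝ := ∑' k : ℕ, 1 / (1 + 2 * (k : ℝ)) ^ p with hS
  have key : (I : ℂ) = (Real.Gamma p : ℂ) * (S : ℂ) := by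
    rw [← hreal, ← hmel.tsum_eq, hS, Complex.ofReal_tsum, ← tsum_mul_left]
    refine tsum_congr fun k => ?_
    rw [Complex.Gamma_ofReal, mul_one, Complex.ofReal_div, Complex.ofReal_one,
      Complex.ofReal_cpow (by positivity)]
    push_cast
    ring
  exact_mod_cast key
end

section
/- For p > 1, ∫_1^∞ |log x|^p (x²+1)/(x²-1)² dx = p ∫_0^1 |log t|^{p-1}/(1-t²) dt, and hence equals Γ(p+1) Σ_{k=0}^∞ 1/(1+2k)^p. -/
open MeasureTheory Real ENNReal Filter Topology Set

lemma my_image_exp_neg : (fun u : ℝ => Real.exp (-u)) '' Set.Ioi 0 = Set.Ioo (0:ℝ) 1 := by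
  ext x
  simp only [Set.mem_image, Set.mem_Ioi, Set.mem_Ioo]
  constructor
  · rintro ⟨u, hu, rfl⟩
    refine ⟨Real.exp_pos _, ?_⟩
    rw [← Real.exp_zero]
    exact Real.exp_lt_exp.mpr (by linarith)
  · rintro ⟨h0, h1⟩
    exact ⟨-Real.log x, by simpa using Real.log_neg h0 h1,
      by rw [neg_neg, Real.exp_log h0]⟩

lemma my_hasDeriv_exp_neg (u : ℝ) :
    HasDerivAt (fun u : ℝ => Real.exp (-u)) (-Real.exp (-u)) u := by
  simpa using (hasDerivAt_neg u).exp

lemma my_injOn_exp_neg : Set.InjOn (fun u : ℝ => Real.exp (-u)) (Set.Ioi 0) := by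
  intro a _ b _ h
  have := Real.exp_injective h
  linarith

lemma my_J (q : ℝ) (hq : 0 ≤ q) (n : ℕ) :
    ∫ t in Set.Ioo (0:ℝ) 1, (-Real.log t) ^ q * t ^ (2*n) =
      (1 / (2*(n:ℝ)+1)) ^ (q+1) * Real.Gamma (q+1) := by
  rw [← my_image_exp_neg,
    integral_image_eq_integral_abs_deriv_smul measurableSet_Ioi
      (fun u _ => (my_hasDeriv_exp_neg u).hasDerivWithinAt) my_injOn_exp_neg]
  rw [← Real.integral_rpow_mul_exp_neg_mul_Ioi (by linarith : (0:ℝ) < q+1)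
    (by positivity : (0:ℝ) < 2*(n:ℝ)+1)]
  refine setIntegral_congr_fun measurableSet_Ioi (fun u hu => ?_)
  rw [smul_eq_mul, abs_neg, abs_of_pos (Real.exp_pos _), Real.log_exp, neg_neg,
    ← Real.exp_nat_mul, add_sub_cancel_right]
  rw [show Real.exp (-u) * (u ^ q * Real.exp ((2*n : ℕ) * (-u)))
      = u ^ q * (Real.exp (-u) * Real.exp ((2*n : ℕ) * (-u))) by ring, ← Real.exp_add]
  congr 2
  push_cast
  ring

lemma my_Jint (q : ℝ) (hq : 0 ≤ q) (n : ℕ) :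
    IntegrableOn (fun t => (-Real.log t) ^ q * t ^ (2*n)) (Set.Ioo (0:ℝ) 1) := by
  rw [← my_image_exp_neg,
    integrableOn_image_iff_integrableOn_abs_deriv_smul measurableSet_Ioi
      (fun u _ => (my_hasDeriv_exp_neg u).hasDerivWithinAt) my_injOn_exp_neg]
  have h := integrableOn_rpow_mul_exp_neg_mul_rpow (p := 1) (s := q) (b := 2*(n:ℝ)+1)
    (by linarith) zero_lt_one (by positivity)
  refine h.congr_fun (fun u hu => ?_) measurableSet_Ioi
  beta_reduce
  rw [Real.rpow_one, smul_eq_mul, abs_neg, abs_of_pos (Real.exp_pos _), Real.log_exp, neg_neg,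
    ← Real.exp_nat_mul]
  rw [show Real.exp (-u) * (u ^ q * Real.exp ((2*n : ℕ) * (-u)))
      = u ^ q * (Real.exp (-u) * Real.exp ((2*n : ℕ) * (-u))) by ring, ← Real.exp_add]
  congr 2
  push_cast
  ring

lemma my_series_step (q : ℝ) (hq : 0 ≤ q) (D : ℝ → ℝ) (c : ℕ → ℝ) (hc : ∀ n, 0 ≤ c n)
    (hD : ∀ t ∈ Set.Ioo (0:ℝ) 1, HasSum (fun n => c n * t ^ (2*n)) (D t))
    (hDm : Measurable D)
    (hsum : Summable fun n => c n * (1/(2*(n:ℝ)+1))^(q+1)) :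
    ∫ t in Set.Ioo (0:ℝ) 1, (-Real.log t) ^ q * D t =
      Real.Gamma (q+1) * ∑' n : ℕ, c n * (1/(2*(n:ℝ)+1))^(q+1) := by
  have hGpos : 0 < Real.Gamma (q+1) := Real.Gamma_pos_of_pos (by linarith)
  have hLm : Measurable fun t : ℝ => (-Real.log t) ^ q :=
    (Real.continuous_rpow_const hq).measurable.comp Real.measurable_log.neg
  have hFm : AEStronglyMeasurable (fun t => (-Real.log t) ^ q * D t)
      (volume.restrict (Set.Ioo (0:ℝ) 1)) := (hLm.mul hDm).aestronglyMeasurable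
  have hnonneg : 0 ≤ᵐ[volume.restrict (Set.Ioo (0:ℝ) 1)]
      fun t => (-Real.log t) ^ q * D t := by
    filter_upwards [ae_restrict_mem measurableSet_Ioo] with t ht
    have h1 : 0 ≤ (-Real.log t) ^ q :=
      Real.rpow_nonneg (by simpa using (Real.log_neg ht.1 ht.2).le) q
    have h2 : 0 ≤ D t := (hD t ht).nonneg
      (fun n => mul_nonneg (hc n) (pow_nonneg ht.1.le _))
    positivity
  rw [integral_eq_lintegral_of_nonneg_ae hnonneg hFm]
  have key : ∫⁻ t in Set.Ioo (0:ℝ) 1, ENNReal.ofReal ((-Real.log t) ^ q * D t) =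
      ∑' n : ℕ, ENNReal.ofReal (c n * ((1/(2*(n:ℝ)+1))^(q+1) * Real.Gamma (q+1))) := by
    have step1 : ∫⁻ t in Set.Ioo (0:ℝ) 1, ENNReal.ofReal ((-Real.log t) ^ q * D t) =
        ∫⁻ t in Set.Ioo (0:ℝ) 1,
          ∑' n : ℕ, ENNReal.ofReal (c n * ((-Real.log t) ^ q * t ^ (2*n))) := by
      refine setLIntegral_congr_fun measurableSet_Ioo (fun t ht => ?_)
      have hL : 0 ≤ (-Real.log t) ^ q :=
        Real.rpow_nonneg (by simpa using (Real.log_neg ht.1 ht.2).le) q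
      have hs : HasSum (fun n => (-Real.log t) ^ q * (c n * t ^ (2*n)))
          ((-Real.log t) ^ q * D t) := (hD t ht).mul_left _
      rw [← hs.tsum_eq, ENNReal.ofReal_tsum_of_nonneg
        (fun n => mul_nonneg hL (mul_nonneg (hc n) (pow_nonneg ht.1.le _))) hs.summable]
      exact tsum_congr fun n => by rw [mul_left_comm]
    rw [step1, lintegral_tsum (f := fun n t => ENNReal.ofReal (c n * ((-Real.log t) ^ q * t ^ (2*n)))) (fun n => (((measurable_const.mul (hLm.mul (measurable_id.pow_const _))) :
        Measurable fun t : ℝ => c n * ((-Real.log t) ^ q * t ^ (2*n))).ennreal_ofReal).aemeasurable)]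
    refine tsum_congr fun n => ?_
    rw [← MeasureTheory.ofReal_integral_eq_lintegral_ofReal
      (((my_Jint q hq n).const_mul (c n)))]
    · rw [integral_const_mul, my_J q hq n]
    · filter_upwards [ae_restrict_mem measurableSet_Ioo] with t ht
      have hL : 0 ≤ (-Real.log t) ^ q :=
        Real.rpow_nonneg (by simpa using (Real.log_neg ht.1 ht.2).le) q
      exact mul_nonneg (hc n) (mul_nonneg hL (pow_nonneg ht.1.le _))
  rw [key, ← ENNReal.ofReal_tsum_of_nonneg
    (fun n => mul_nonneg (hc n) (mul_nonneg (Real.rpow_nonneg (by positivity) _) hGpos.le))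
    (by simpa only [mul_assoc] using hsum.mul_right (Real.Gamma (q+1)))]
  rw [ENNReal.toReal_ofReal (tsum_nonneg
    (fun n => mul_nonneg (hc n) (mul_nonneg (Real.rpow_nonneg (by positivity) _) hGpos.le)))]
  calc ∑' n : ℕ, c n * ((1/(2*(n:ℝ)+1))^(q+1) * Real.Gamma (q+1))
      = ∑' n : ℕ, (c n * (1/(2*(n:ℝ)+1))^(q+1)) * Real.Gamma (q+1) :=
        tsum_congr fun n => by ring
    _ = Real.Gamma (q+1) * ∑' n : ℕ, c n * (1/(2*(n:ℝ)+1))^(q+1) := by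
        rw [tsum_mul_right, mul_comm]


lemma my_sumB {t : ℝ} (ht : t ∈ Set.Ioo (0:ℝ) 1) :
    HasSum (fun n : ℕ => (1:ℝ) * t ^ (2*n)) ((1 - t^2)⁻¹) := by
  have h2 : t^2 < 1 := by nlinarith [ht.1, ht.2]
  have := hasSum_geometric_of_lt_one (sq_nonneg t) h2
  simpa [pow_mul] using this

lemma my_sumA {t : ℝ} (ht : t ∈ Set.Ioo (0:ℝ) 1) :
    HasSum (fun n : ℕ => (2*(n:ℝ)+1) * t ^ (2*n)) ((1 + t^2)/(1 - t^2)^2) := by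
  have h2 : t^2 < 1 := by nlinarith [ht.1, ht.2]
  have hne : (1:ℝ) - t^2 ≠ 0 := by nlinarith
  have hgeo := hasSum_geometric_of_lt_one (sq_nonneg t) h2
  have hcoe : HasSum (fun n : ℕ => (n:ℝ) * (t^2) ^ n) (t^2 / (1 - t^2)^2) :=
    hasSum_coe_mul_geometric_of_norm_lt_one (by rwa [Real.norm_eq_abs, abs_of_nonneg (sq_nonneg t)])
  have := (hcoe.mul_left 2).add hgeo
  have heq : (fun n : ℕ => 2 * ((n:ℝ) * (t^2)^n) + (t^2)^n)
      = fun n : ℕ => (2*(n:ℝ)+1) * t ^ (2*n) := by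
    funext n; rw [pow_mul]; ring
  rw [heq] at this
  convert this using 1
  case e'_3 => rfl
  field_simp
  ring

lemma my_summable (p : ℝ) (hp : 1 < p) :
    Summable (fun n : ℕ => (1/(2*(n:ℝ)+1))^p) := by
  have hbase : Summable (fun n : ℕ => (1/((n:ℝ)+1))^p) := by
    have h0 : Summable (fun n : ℕ => 1/(n:ℝ)^p) := Real.summable_one_div_nat_rpow.mpr hp
    have h1 := (summable_nat_add_iff 1).mpr h0
    refine h1.congr fun n => ?_
    push_cast
    rw [one_div, one_div, ← Real.inv_rpow (by positivity)]
  refine Summable.of_nonneg_of_le (fun n => Real.rpow_nonneg (by positivity) _)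
    (fun n => ?_) hbase
  exact Real.rpow_le_rpow (by positivity)
    (by rw [div_le_div_iff₀ (by positivity) (by positivity)]; push_cast; linarith) (by linarith)

lemma my_term_eq (p : ℝ) (n : ℕ) : (1/(2*(n:ℝ)+1))^p = 1/(1+2*(n:ℝ))^p := by
  rw [add_comm, one_div, Real.inv_rpow (by positivity), one_div]

lemma my_hterm (p : ℝ) (n : ℕ) :
    (2*(n:ℝ)+1) * (1/(2*(n:ℝ)+1))^(p+1) = (1/(2*(n:ℝ)+1))^p := by
  have h : (0:ℝ) < 2*(n:ℝ)+1 := by positivity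
  rw [Real.rpow_add (by positivity : (0:ℝ) < 1/(2*(n:ℝ)+1)), Real.rpow_one]
  field_simp

lemma my_image_inv : (fun t : ℝ => t⁻¹) '' Set.Ioo 0 1 = Set.Ioi (1:ℝ) := by
  ext x
  simp only [Set.mem_image, Set.mem_Ioi, Set.mem_Ioo]
  constructor
  · rintro ⟨t, ⟨h0, h1⟩, rfl⟩
    rw [lt_inv_comm₀] <;> simp_all
  · intro hx
    have hx0 : (0:ℝ) < x := by linarith
    refine ⟨x⁻¹, ⟨by positivity, ?_⟩, inv_inv x⟩
    rw [inv_lt_one_iff₀]; right; exact hx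


theorem stmt3 (p : ℝ) (hp : 1 < p) :
    (∫ x in Set.Ioi (1:ℝ), |Real.log x| ^ p * (x ^ 2 + 1) / (x ^ 2 - 1) ^ 2) =
      p * ∫ t in (0:ℝ)..1, |Real.log t| ^ (p - 1) / (1 - t ^ 2) ∧
    (∫ x in Set.Ioi (1:ℝ), |Real.log x| ^ p * (x ^ 2 + 1) / (x ^ 2 - 1) ^ 2) =
      Real.Gamma (p + 1) * ∑' k : ℕ, 1 / (1 + 2 * (k : ℝ)) ^ p := by
  have hp0 : (0:ℝ) < p := by linarith
  -- Claim A
  have hA : (∫ x in Set.Ioi (1:ℝ), |Real.log x| ^ p * (x ^ 2 + 1) / (x ^ 2 - 1) ^ 2) =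
      Real.Gamma (p + 1) * ∑' k : ℕ, 1 / (1 + 2 * (k : ℝ)) ^ p := by
    rw [← my_image_inv,
      integral_image_eq_integral_abs_deriv_smul measurableSet_Ioo
        (fun t ht => (hasDerivAt_inv (ne_of_gt ht.1)).hasDerivWithinAt)
        (inv_injective.injOn)]
    have hcongr : ∫ t in Set.Ioo (0:ℝ) 1,
        |-(t^2)⁻¹| • (|Real.log t⁻¹| ^ p * ((t⁻¹) ^ 2 + 1) / ((t⁻¹) ^ 2 - 1) ^ 2) =
        ∫ t in Set.Ioo (0:ℝ) 1, (-Real.log t) ^ p * ((1 + t^2)/(1 - t^2)^2) := by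
      refine setIntegral_congr_fun measurableSet_Ioo (fun t ht => ?_)
      have h0 := ht.1
      have h1 := ht.2
      have hne : (1:ℝ) - t^2 ≠ 0 := by nlinarith
      have htne : t ≠ 0 := ne_of_gt h0
      have hinv : (1:ℝ) < t⁻¹ := by
        rw [lt_inv_comm₀ one_pos h0]; simpa using h1
      have hne2 : (t⁻¹)^2 - 1 ≠ 0 := by nlinarith
      rw [smul_eq_mul, abs_neg, abs_of_pos (by positivity : (0:ℝ) < (t^2)⁻¹),
        Real.log_inv, abs_neg, abs_of_neg (Real.log_neg h0 h1)]
      generalize (-Real.log t) ^ p = L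
      field_simp
    rw [hcongr, my_series_step p hp0.le _ _ (fun n => by positivity)
      (fun t ht => my_sumA ht)
      (by fun_prop)
      ((my_summable p hp).congr fun n => (my_hterm p n).symm)]
    congr 1
    exact tsum_congr fun n => (my_hterm p n).trans (my_term_eq p n)
  -- Claim B
  have hB : (∫ t in (0:ℝ)..1, |Real.log t| ^ (p - 1) / (1 - t ^ 2)) =
      Real.Gamma p * ∑' k : ℕ, 1 / (1 + 2 * (k : ℝ)) ^ p := by
    rw [intervalIntegral.integral_of_le zero_le_one, integral_Ioc_eq_integral_Ioo]
    have hcongr : ∫ t in Set.Ioo (0:ℝ) 1, |Real.log t| ^ (p-1) / (1 - t ^ 2) =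
        ∫ t in Set.Ioo (0:ℝ) 1, (-Real.log t) ^ (p-1) * ((1 - t^2)⁻¹) := by
      refine setIntegral_congr_fun measurableSet_Ioo (fun t ht => ?_)
      rw [abs_of_neg (Real.log_neg ht.1 ht.2), div_eq_mul_inv]
    rw [hcongr, my_series_step (p-1) (by linarith) _ (fun _ => (1:ℝ))
      (fun n => zero_le_one) (fun t ht => my_sumB ht) (by fun_prop)
      (by
        refine ((my_summable p hp).congr fun n => ?_)
        rw [one_mul, sub_add_cancel])]
    rw [sub_add_cancel]
    congr 1
    exact tsum_congr fun n => by rw [one_mul]; exact my_term_eq p n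
  refine ⟨?_, hA⟩
  rw [hA, hB, ← mul_assoc, Real.Gamma_add_one (ne_of_gt hp0)]
end

section
/- Let s ∈ (0,1), p > 1 with sp = 1, and u_ε the Moser-type family (u_ε(x) = |log ε|^{1-s} for |x| ≤ ε, = |log|x||/|log ε|^s for ε < |x| < 1, = 0 otherwise). Then ‖u_ε‖_{L^p(ℝ)}^p = O(|log ε|^{-1}) as ε → 0; in particular ‖u_ε‖_{L^p}^p → 0. -/
open MeasureTheory Real ENNReal Filter Topology Set

lemma log_rpow_bound {p x : ℝ} (hp : 0 < p) (hx : 0 < x) (hx1 : x < 1) :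
    |Real.log x| ^ p ≤ (2 * p) ^ p * x ^ (-(1/2) : ℝ) := by
  set t := -Real.log x with ht
  have htn : 0 ≤ t := by
    have := Real.log_nonpos hx.le hx1.le; linarith
  have habs : |Real.log x| = t := by rw [abs_of_nonpos (by linarith : Real.log x ≤ 0)]
  have h2p : (0:ℝ) < 2 * p := by linarith
  have h1 : t ≤ 2 * p * Real.exp (t / (2 * p)) := by
    have := Real.add_one_le_exp (t / (2 * p))
    have h2 : t / (2 * p) ≤ Real.exp (t / (2 * p)) := by nlinarith [div_nonneg htn h2p.le]
    calc t = 2 * p * (t / (2 * p)) := by field_simp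
      _ ≤ 2 * p * Real.exp (t / (2 * p)) := by nlinarith
  have h3 : t ^ p ≤ (2 * p * Real.exp (t / (2 * p))) ^ p :=
    Real.rpow_le_rpow htn h1 hp.le
  have h4 : (2 * p * Real.exp (t / (2 * p))) ^ p
      = (2 * p) ^ p * Real.exp (t / 2) := by
    rw [Real.mul_rpow h2p.le (Real.exp_pos _).le, ← Real.exp_mul]
    congr 1
    field_simp
  have h5 : Real.exp (t / 2) = x ^ (-(1/2) : ℝ) := by
    rw [Real.rpow_def_of_pos hx]
    congr 1
    rw [ht]; ring
  rw [habs, ← h5, ← h4]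
  exact h3

lemma moser_integral_bound (s p : ℝ) (hs : s ∈ Set.Ioo (0:ℝ) 1) (hp : 1 < p)
    (hsp : s * p = 1) :
    ∃ C₁ ≥ (0:ℝ), ∀ ε ∈ Set.Ioo (0:ℝ) 1,
      (∫ x : ℝ, |moser s ε x| ^ p) ≤
        2 * (ε * |Real.log ε| ^ (p - 1)) + 2 * C₁ / |Real.log ε| := by
  have hp0 : (0:ℝ) < p := by linarith
  -- integrability of |log x|^p on Ioo 0 1
  have hmeas : Measurable fun x : ℝ => |Real.log x| ^ p :=
    ((Real.continuous_rpow_const hp0.le).measurable).comp (Real.measurable_log.abs)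
  have hint : IntegrableOn (fun x : ℝ => |Real.log x| ^ p) (Ioo 0 1) := by
    have hg : IntegrableOn (fun x : ℝ => (2*p) ^ p * x ^ (-(1/2):ℝ)) (Ioo 0 1) := by
      have h0 := intervalIntegral.intervalIntegrable_rpow'
        (a := 0) (b := 1) (r := -(1/2)) (by norm_num)
      rw [intervalIntegrable_iff] at h0
      have hsub : Ioo (0:ℝ) 1 ⊆ Set.uIoc (0:ℝ) 1 := by
        rw [uIoc_of_le (by norm_num : (0:ℝ) ≤ 1)]
        exact Ioo_subset_Ioc_self
      exact (h0.mono_set hsub).const_mul _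
    refine hg.mono' hmeas.aestronglyMeasurable ?_
    filter_upwards [ae_restrict_mem measurableSet_Ioo] with x hx
    rw [Real.norm_eq_abs, abs_of_nonneg (Real.rpow_nonneg (abs_nonneg _) _)]
    exact log_rpow_bound hp0 hx.1 hx.2
  refine ⟨∫ x in Ioo (0:ℝ) 1, |Real.log x| ^ p,
    setIntegral_nonneg measurableSet_Ioo fun x _ => Real.rpow_nonneg (abs_nonneg _) _,
    fun ε hε => ?_⟩
  obtain ⟨hε0, hε1⟩ := hε
  have hlogneg : Real.log ε < 0 := Real.log_neg hε0 hε1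
  have hεl : 0 < |Real.log ε| := abs_pos.mpr hlogneg.ne
  set A : ℝ := |Real.log ε| ^ (p - 1) with hA
  have hA0 : 0 ≤ A := Real.rpow_nonneg (abs_nonneg _) _
  set G : ℝ → ℝ := fun x =>
    Set.indicator (Ioc 0 ε) (fun _ => A) x +
      Set.indicator (Ioo (0:ℝ) 1) (fun x => |Real.log x| ^ p) x / |Real.log ε| with hG
  -- symmetry
  have hsymm : (∫ x : ℝ, |moser s ε x| ^ p) = 2 * ∫ x in Ioi (0:ℝ), |moser s ε x| ^ p := by
    rw [← integral_comp_abs (f := fun x => |moser s ε x| ^ p)]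
    congr 1 with x
    simp only [moser, abs_abs]
  -- integrability of G on Ioi 0
  have hG1 : Integrable (fun x : ℝ => Set.indicator (Ioc 0 ε) (fun _ => A) x) := by
    rw [integrable_indicator_iff measurableSet_Ioc]
    exact (integrableOn_const_iff).mpr (Or.inr measure_Ioc_lt_top)
  have hG2 : Integrable (fun x : ℝ =>
      Set.indicator (Ioo (0:ℝ) 1) (fun x => |Real.log x| ^ p) x / |Real.log ε|) := by
    refine Integrable.div_const ?_ _
    rw [integrable_indicator_iff measurableSet_Ioo]
    exact hint
  have hGint : Integrable G := hG1.add hG2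
  -- pointwise bound
  have hbound : ∀ x ∈ Ioi (0:ℝ), |moser s ε x| ^ p ≤ G x := by
    intro x hx
    have hx0 : 0 < x := hx
    have hGnn : ∀ y : ℝ, 0 ≤ Set.indicator (Ioo (0:ℝ) 1) (fun z => |Real.log z| ^ p) y
        / |Real.log ε| :=
      fun y => div_nonneg (Set.indicator_nonneg
        (fun z _ => Real.rpow_nonneg (abs_nonneg _) _) _) (abs_nonneg _)
    by_cases h1 : x ≤ ε
    · have hm : moser s ε x = |Real.log ε| ^ (1 - s) := by
        simp [moser, abs_of_pos hx0, h1]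
      have : |moser s ε x| ^ p = A := by
        rw [hm, abs_of_nonneg (Real.rpow_nonneg (abs_nonneg _) _),
          ← Real.rpow_mul (abs_nonneg _)]
        congr 1
        have : (1 - s) * p = p - s * p := by ring
        rw [this, hsp]
      rw [this]
      simp only [hG]
      have hxIoc : x ∈ Ioc (0:ℝ) ε := ⟨hx0, h1⟩
      rw [Set.indicator_of_mem hxIoc]
      have := hGnn x
      linarith
    · push_neg at h1
      by_cases h2 : x < 1
      · have hm : moser s ε x = |Real.log x| / |Real.log ε| ^ s := by
          simp [moser, abs_of_pos hx0, not_le.mpr h1, h2]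
        have hval : |moser s ε x| ^ p = |Real.log x| ^ p / |Real.log ε| := by
          rw [hm, abs_of_nonneg (div_nonneg (abs_nonneg _)
            (Real.rpow_nonneg (abs_nonneg _) _)),
            Real.div_rpow (abs_nonneg _) (Real.rpow_nonneg (abs_nonneg _) _),
            ← Real.rpow_mul (abs_nonneg _), hsp, Real.rpow_one]
        rw [hval]
        simp only [hG]
        have hxIoo : x ∈ Ioo (0:ℝ) 1 := ⟨hx0, h2⟩
        have hnotIoc : x ∉ Ioc (0:ℝ) ε := fun h => absurd h.2 (not_le.mpr h1)
        rw [Set.indicator_of_mem hxIoo, Set.indicator_of_notMem hnotIoc]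
        simp
      · push_neg at h2
        have hm : moser s ε x = 0 := by
          have : ¬ |x| ≤ ε := by rw [abs_of_pos hx0]; linarith
          have h2' : ¬ |x| < 1 := by rw [abs_of_pos hx0]; linarith
          simp [moser, this, h2']
        rw [hm, abs_zero, Real.zero_rpow hp0.ne']
        simp only [hG]
        have := hGnn x
        have := Set.indicator_nonneg (s := Ioc (0:ℝ) ε) (f := fun _ : ℝ => A)
          (fun _ _ => hA0) x
        linarith
  -- integral comparison on Ioi 0
  have hmono : (∫ x in Ioi (0:ℝ), |moser s ε x| ^ p) ≤ ∫ x in Ioi (0:ℝ), G x := by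
    refine integral_mono_of_nonneg ?_ (hGint.restrict) ?_
    · exact Eventually.of_forall fun x => Real.rpow_nonneg (abs_nonneg _) _
    · filter_upwards [ae_restrict_mem measurableSet_Ioi] with x hx
      exact hbound x hx
  -- compute ∫ G on Ioi 0
  have hGval : (∫ x in Ioi (0:ℝ), G x)
      = ε * A + (∫ x in Ioo (0:ℝ) 1, |Real.log x| ^ p) / |Real.log ε| := by
    rw [hG, integral_add (hG1.restrict) (hG2.restrict)]
    congr 1
    · rw [setIntegral_indicator measurableSet_Ioc,
        Set.inter_eq_right.mpr (Ioc_subset_Ioi_self), setIntegral_const]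
      simp [Real.volume_Ioc, ENNReal.toReal_ofReal hε0.le, mul_comm, hε0.le]
    · rw [integral_div, setIntegral_indicator measurableSet_Ioo,
        Set.inter_eq_right.mpr (fun y hy => hy.1)]
  rw [hsymm]
  calc 2 * ∫ x in Ioi (0:ℝ), |moser s ε x| ^ p
      ≤ 2 * ∫ x in Ioi (0:ℝ), G x := by linarith
    _ = 2 * (ε * A) + 2 * (∫ x in Ioo (0:ℝ) 1, |Real.log x| ^ p) / |Real.log ε| := by
        rw [hGval]; ring
    _ = 2 * (ε * A) + 2 * (∫ x in Ioo (0:ℝ) 1, |Real.log x| ^ p) / |Real.log ε| := rfl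

theorem stmt5 (s p : ℝ) (hs : s ∈ Set.Ioo (0:ℝ) 1) (hp : 1 < p) (hsp : s * p = 1) :
    (∃ C > 0, ∃ ε₀ ∈ Set.Ioo (0:ℝ) 1, ∀ ε ∈ Set.Ioo (0:ℝ) ε₀,
      (∫ x : ℝ, |moser s ε x| ^ p) ≤ C / |Real.log ε|) ∧
    Tendsto (fun ε : ℝ => ∫ x : ℝ, |moser s ε x| ^ p) (𝓝[>] 0) (𝓝 0) := by
  obtain ⟨C₁, hC₁0, hbd⟩ := moser_integral_bound s p hs hp hsp
  have hp0 : (0:ℝ) < p := by linarith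
  -- ε * |log ε|^p → 0
  have hneg : Tendsto (fun ε : ℝ => -Real.log ε) (𝓝[>] (0:ℝ)) atTop :=
    tendsto_neg_atBot_atTop.comp Real.tendsto_log_nhdsGT_zero
  have htend : Tendsto (fun ε : ℝ => ε * |Real.log ε| ^ p) (𝓝[>] (0:ℝ)) (𝓝 0) := by
    have h0 := (tendsto_rpow_mul_exp_neg_mul_atTop_nhds_zero p 1 one_pos).comp hneg
    refine h0.congr' ?_
    filter_upwards [Ioo_mem_nhdsGT_of_mem (by norm_num : (0:ℝ) ∈ Ico (0:ℝ) 1)]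
      with ε hε
    obtain ⟨hε0, hε1⟩ := hε
    have hlogneg : Real.log ε < 0 := Real.log_neg hε0 hε1
    simp only [Function.comp]
    rw [abs_of_neg hlogneg]
    rw [show -1 * -Real.log ε = Real.log ε by ring, Real.exp_log hε0]
    ring
  -- find ε₀
  have hev : ∀ᶠ ε in 𝓝[>] (0:ℝ), ε * |Real.log ε| ^ p ≤ 1 := by
    filter_upwards [htend.eventually (eventually_le_nhds (by norm_num : (0:ℝ) < 1))]
      with ε h using h
  obtain ⟨ε₁, hε₁pos, hε₁⟩ := (nhdsGT_basis (0:ℝ)).eventually_iff.mp hev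
  set ε₀ : ℝ := min ε₁ (1/2) with hε₀def
  have hε₀pos : 0 < ε₀ := lt_min hε₁pos (by norm_num)
  have hε₀lt1 : ε₀ < 1 := lt_of_le_of_lt (min_le_right _ _) (by norm_num)
  set C : ℝ := 2 + 2 * C₁ with hCdef
  have hCpos : 0 < C := by linarith
  have key : ∀ ε ∈ Set.Ioo (0:ℝ) ε₀, (∫ x : ℝ, |moser s ε x| ^ p) ≤ C / |Real.log ε| := by
    intro ε ⟨hε0, hεlt⟩
    have hε1 : ε < 1 := lt_of_lt_of_le (lt_of_lt_of_le hεlt (min_le_right _ _)) (by norm_num)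
    have hεIoo : ε ∈ Ioo (0:ℝ) 1 := ⟨hε0, hε1⟩
    have hlogneg : Real.log ε < 0 := Real.log_neg hε0 hε1
    have hεl : 0 < |Real.log ε| := abs_pos.mpr hlogneg.ne
    have hsmall : ε * |Real.log ε| ^ p ≤ 1 :=
      hε₁ ⟨hε0, lt_of_lt_of_le hεlt (min_le_left _ _)⟩
    have hAle : ε * |Real.log ε| ^ (p - 1) ≤ 1 / |Real.log ε| := by
      rw [Real.rpow_sub hεl, Real.rpow_one]
      have heq : ε * (|Real.log ε| ^ p / |Real.log ε|)
          = (ε * |Real.log ε| ^ p) / |Real.log ε| := by ring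
      rw [heq]
      gcongr
    calc (∫ x : ℝ, |moser s ε x| ^ p)
        ≤ 2 * (ε * |Real.log ε| ^ (p - 1)) + 2 * C₁ / |Real.log ε| := hbd ε hεIoo
      _ ≤ 2 * (1 / |Real.log ε|) + 2 * C₁ / |Real.log ε| := by
          have := hAle; gcongr
      _ = C / |Real.log ε| := by rw [hCdef]; field_simp
  refine ⟨⟨C, hCpos, ε₀, ⟨hε₀pos, hε₀lt1⟩, key⟩, ?_⟩
  -- squeeze
  have hCtend : Tendsto (fun ε : ℝ => C / |Real.log ε|) (𝓝[>] (0:ℝ)) (𝓝 0) := by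
    refine Tendsto.div_atTop tendsto_const_nhds ?_
    refine tendsto_atTop_mono' _ ?_ hneg
    filter_upwards [Ioo_mem_nhdsGT_of_mem (by norm_num : (0:ℝ) ∈ Ico (0:ℝ) 1)]
      with ε hε
    rw [abs_of_neg (Real.log_neg hε.1 hε.2)]
  refine squeeze_zero' ?_ ?_ hCtend
  · exact Eventually.of_forall fun ε =>
      integral_nonneg fun x => Real.rpow_nonneg (abs_nonneg _) _
  · filter_upwards [Ioo_mem_nhdsGT_of_mem (⟨le_refl _, hε₀pos⟩ : (0:ℝ) ∈ Ico (0:ℝ) ε₀)]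
      with ε hε using key ε hε
end

section
/- Let p > 1, α > 0, r_0 ≥ 1, and u: ℝ → ℝ even, non-increasing on [0,∞), with ‖u‖_{L^p(ℝ)} ≤ 1 and |u| ≤ 1 on {|x| ≥ r_0}. Define Φ(t) = e^t − Σ_{k=0}^{⌈p-2⌉} t^k/k!. Then ∫_{|x| ≥ r_0} Φ(α |u|^{p/(p-1)}) dx ≤ C for a constant C depending only on α, p, r_0 (not on u). -/
open MeasureTheory Real ENNReal Filter Topology Set

lemma exp_tsum (t : ℝ) : Real.exp t = ∑' n : ℕ, t ^ n / n.factorial := by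
  rw [Real.exp_eq_exp_ℝ, NormedSpace.exp_eq_tsum_div]

lemma phi_tail (p t : ℝ) :
    Phi p t = ∑' k : ℕ, t ^ (k + (⌈p - 2⌉₊ + 1)) / ((k + (⌈p - 2⌉₊ + 1)).factorial : ℝ) := by
  have h := Summable.sum_add_tsum_nat_add (f := fun n => t ^ n / (n.factorial : ℝ))
    (⌈p - 2⌉₊ + 1) (Real.summable_pow_div_factorial t)
  rw [Phi, exp_tsum, ← h]
  ring

/-- key pointwise bound -/
lemma phi_key (p α : ℝ) (hp : 1 < p) (hα : 0 < α) (v : ℝ) (hv0 : 0 ≤ v) (hv1 : v ≤ 1) :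
    Phi p (α * v ^ (p / (p - 1))) ≤ Real.exp α * v ^ p := by
  set N := ⌈p - 2⌉₊ + 1 with hN
  set q := p / (p - 1) with hq
  have hp1 : (0:ℝ) < p - 1 := by linarith
  have hq0 : 0 < q := div_pos (by linarith) hp1
  -- N ≥ p - 1 so q * N ≥ p
  have hNp : p ≤ q * N := by
    have h1 : p - 1 ≤ (N : ℝ) := by
      have := Nat.le_ceil (p - 2)
      push_cast [hN]
      linarith
    have : q * (p - 1) ≤ q * N := by nlinarith
    rw [hq] at this
    rw [div_mul_cancel₀] at this
    · linarith [this]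
    · exact ne_of_gt hp1
  -- exponent bound for each k
  have hexp : ∀ k : ℕ, v ^ (q * (k + N : ℕ)) ≤ v ^ p := by
    intro k
    rcases hv0.eq_or_lt with h | h
    · rw [← h, Real.zero_rpow (by positivity), Real.zero_rpow (by linarith)]
    · apply Real.rpow_le_rpow_of_exponent_ge h hv1
      calc p ≤ q * N := hNp
        _ ≤ q * (k + N : ℕ) := by
            apply mul_le_mul_of_nonneg_left _ hq0.le
            push_cast; linarith [Nat.cast_nonneg (α := ℝ) k]
  rw [phi_tail]
  have hterm : ∀ k : ℕ, (α * v ^ q) ^ (k + N) / ((k + N).factorial : ℝ)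
      ≤ v ^ p * (α ^ (k + N) / ((k + N).factorial : ℝ)) := by
    intro k
    rw [mul_pow]
    have h1 : (v ^ q) ^ (k + N) = v ^ (q * (k + N : ℕ)) := by
      rw [← Real.rpow_natCast (v ^ q), ← Real.rpow_mul hv0]
    have h2 : (v ^ q) ^ (k + N) ≤ v ^ p := by rw [h1]; exact hexp k
    have hfac : (0:ℝ) < ((k + N).factorial : ℝ) := by positivity
    rw [div_le_iff₀ hfac]
    have : α ^ (k + N) * (v ^ q) ^ (k + N) ≤ α ^ (k + N) * v ^ p :=
      mul_le_mul_of_nonneg_left h2 (by positivity)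
    calc α ^ (k + N) * (v ^ q) ^ (k + N) ≤ α ^ (k + N) * v ^ p := this
      _ = v ^ p * (α ^ (k + N) / ((k + N).factorial : ℝ)) * ((k + N).factorial : ℝ) := by
          field_simp
  have hsum1 : Summable (fun k : ℕ => (α * v ^ q) ^ (k + N) / ((k + N).factorial : ℝ)) :=
    (Real.summable_pow_div_factorial (α * v ^ q)).comp_injective (add_left_injective N)
  have hsum2 : Summable (fun k : ℕ => v ^ p * (α ^ (k + N) / ((k + N).factorial : ℝ))) :=
    ((Real.summable_pow_div_factorial α).comp_injective (add_left_injective N)).mul_left _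
  calc (∑' k : ℕ, (α * v ^ q) ^ (k + N) / ((k + N).factorial : ℝ))
      ≤ ∑' k : ℕ, v ^ p * (α ^ (k + N) / ((k + N).factorial : ℝ)) :=
        Summable.tsum_le_tsum hterm hsum1 hsum2
    _ = v ^ p * ∑' k : ℕ, α ^ (k + N) / ((k + N).factorial : ℝ) := tsum_mul_left
    _ ≤ Real.exp α * v ^ p := by
        rw [mul_comm]
        apply mul_le_mul_of_nonneg_right _ (by positivity)
        have h := Summable.sum_add_tsum_nat_add (f := fun n => α ^ n / (n.factorial : ℝ)) N
          (Real.summable_pow_div_factorial α)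
        have hpos : 0 ≤ ∑ k ∈ Finset.range N, α ^ k / (k.factorial : ℝ) := by positivity
        rw [exp_tsum]
        linarith [h]

theorem stmt11 (p α r₀ : ℝ) (hp : 1 < p) (hα : 0 < α) (hr : 1 ≤ r₀) :
    ∃ C : ℝ, ∀ u : ℝ → ℝ, (∀ x, u (-x) = u x) → AntitoneOn u (Set.Ici 0) →
      (∫⁻ x : ℝ, ENNReal.ofReal (|u x| ^ p)) ≤ 1 →
      (∀ x : ℝ, r₀ ≤ |x| → |u x| ≤ 1) →
      ∫⁻ x in {x : ℝ | r₀ ≤ |x|},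
        ENNReal.ofReal (Phi p (α * |u x| ^ (p / (p - 1)))) ≤ ENNReal.ofReal C := by
  refine ⟨Real.exp α, fun u _ _ hLp hu1 => ?_⟩
  have hS : MeasurableSet {x : ℝ | r₀ ≤ |x|} :=
    measurableSet_le measurable_const continuous_abs.measurable
  calc ∫⁻ x in {x : ℝ | r₀ ≤ |x|}, ENNReal.ofReal (Phi p (α * |u x| ^ (p / (p - 1))))
      ≤ ∫⁻ x in {x : ℝ | r₀ ≤ |x|}, ENNReal.ofReal (Real.exp α) * ENNReal.ofReal (|u x| ^ p) := by
        apply setLIntegral_mono' hS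
        intro x hx
        rw [← ENNReal.ofReal_mul (Real.exp_pos α).le]
        exact ENNReal.ofReal_le_ofReal
          (phi_key p α hp hα _ (abs_nonneg _) (hu1 x hx))
    _ = ENNReal.ofReal (Real.exp α) * ∫⁻ x in {x : ℝ | r₀ ≤ |x|}, ENNReal.ofReal (|u x| ^ p) :=
        lintegral_const_mul' _ _ ENNReal.ofReal_ne_top
    _ ≤ ENNReal.ofReal (Real.exp α) * 1 := by
        gcongr
        exact le_trans (setLIntegral_le_lintegral _ _) hLp
    _ = ENNReal.ofReal (Real.exp α) := mul_one _
end

section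
/- Let u ∈ W^{s,p}(ℝ) (sp = 1) be even, nonnegative, non-increasing on [0,∞), and let r_0 > 0. Define v(x) = u(x) − u(r_0) for |x| ≤ r_0 and v(x) = 0 for |x| > r_0. Then the Gagliardo seminorm satisfies [v]^p ≤ [u]^p. -/
open MeasureTheory Real ENNReal Filter Topology Set

theorem stmt12 (s p r₀ : ℝ) (hs : s ∈ Set.Ioo (0:ℝ) 1) (hp : 1 < p) (hsp : s * p = 1)
    (hr : 0 < r₀) (u : ℝ → ℝ) (hu : InW p u)
    (heven : ∀ x, u (-x) = u x) (hnn : ∀ x, 0 ≤ u x) (hmono : AntitoneOn u (Set.Ici 0))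
    (v : ℝ → ℝ) (hv : ∀ x, v x = if |x| ≤ r₀ then u x - u r₀ else 0) :
    gagP p v ≤ gagP p u := by
  have habs : ∀ z : ℝ, u z = u |z| := by
    intro z
    rcases abs_choice z with h | h
    · rw [h]
    · rw [h, heven]
  have step : ∀ a b : ℝ, |a| ≤ r₀ → ¬ |b| ≤ r₀ → |u a - u r₀| ≤ |u a - u b| := by
    intro a b ha hb
    push_neg at hb
    have hb1 : u |b| ≤ u r₀ := hmono hr.le (le_trans hr.le hb.le) hb.le
    have ha1 : u r₀ ≤ u |a| := hmono (abs_nonneg a) hr.le ha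
    rw [habs a, habs b,
      abs_of_nonneg (show (0:ℝ) ≤ u |a| - u r₀ by linarith),
      abs_of_nonneg (show (0:ℝ) ≤ u |a| - u |b| by linarith)]
    linarith
  have key : ∀ x y : ℝ, |v x - v y| ≤ |u x - u y| := by
    intro x y
    rw [hv x, hv y]
    by_cases hx : |x| ≤ r₀ <;> by_cases hy : |y| ≤ r₀ <;> simp [hx, hy]
    · exact step x y hx hy
    · rw [abs_sub_comm (u r₀), abs_sub_comm (u x)]
      exact step y x hy hx
  unfold gagP
  refine lintegral_mono fun x => lintegral_mono fun y => ?_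
  apply ENNReal.ofReal_le_ofReal
  have hnum : |v x - v y| ^ p ≤ |u x - u y| ^ p :=
    Real.rpow_le_rpow (abs_nonneg _) (key x y) (by linarith)
  rcases eq_or_lt_of_le (show (0:ℝ) ≤ |x - y| ^ 2 by positivity) with hd | hd
  · rw [← hd, _root_.div_zero, _root_.div_zero]
  · exact div_le_div_of_nonneg_right hnum hd.le
end
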